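/- arXiv:2308.02863 — 3 statements merged into one kernel-verified Lean document; each statement's English description precedes it below -/
import Mathlib

section
/- Let p, q be non-negative integers with p ≤ q + 1, and let α₁, …, α_p, β₁, …, β_q be positive real parameters. Define the polynomials 𝐋_n(x) = ₚ₊₁F_q(−n, α₁, …, α_p; β₁, …, β_q; x) for n ∈ ℤ₊. Then e^t · ₚF_q(α₁, …, α_p; β₁, …, β_q; −xt) = Σ_{n=0}^∞ 𝐋_n(x) tⁿ/n! for all t, x in the open unit disc of ℂ; moreover, if p ≤ q, this identity holds for all t, x ∈ ℂ. -/
/-!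
Since `(-n)_k = (-1)^k n!/(n-k)!`, the coefficient of `t^n/n!` in the Cauchy product of
`e^t = ∑ t^m/m!` with `ₚF_q(α; β; -xt)` is exactly `𝐋_n(x)`. The Cauchy product
is legitimate because `ₚF_q(α; β; z)` converges absolutely by the ratio test: the ratio of
consecutive terms behaves like `k^(p-q-1) ‖z‖`, which tends to `‖z‖` if `p = q + 1` and to `0`
if `p ≤ q`.
-/

/-- Pochhammer symbol `(c)_k = c (c+1) ⋯ (c+k-1)`. -/
noncomputable def poch (c : ℂ) (k : ℕ) : ℂ := ∏ j ∈ Finset.range k, (c + j)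

/-- The polynomials `𝐋_n(x) = ₚ₊₁F_q(-n, α₁,…,α_p; β₁,…,β_q; x)`
(the series terminates since `(-n)_k = 0` for `k > n`). -/
noncomputable def bL (p q : ℕ) (α : Fin p → ℝ) (β : Fin q → ℝ) (n : ℕ) (x : ℂ) : ℂ :=
  ∑' k : ℕ, poch (-(n : ℂ)) k * (∏ i, poch (α i) k) /
      (∏ j, poch (β j) k) * x ^ k / (Nat.factorial k)

open Finset Filter Topology Nat

lemma poch_succ (c : ℂ) (k : ℕ) : poch c (k + 1) = poch c k * (c + k) :=
  prod_range_succ _ _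

lemma poch_neg_natCast (n k : ℕ) : poch (-(n : ℂ)) k = (-1) ^ k * n.descFactorial k := by
  induction k with
  | zero => simp [poch]
  | succ k ih =>
    rw [poch_succ, ih, descFactorial_succ]
    rcases le_or_gt k n with hk | hk
    · push_cast [hk]
      ring
    · simp [descFactorial_eq_zero_iff_lt.2 hk]

lemma norm_natCast_add_one (k : ℕ) : ‖(k : ℂ) + 1‖ = k + 1 := by
  exact_mod_cast Complex.norm_natCast (k + 1)

noncomputable def hypergeometricTerm {p q : ℕ} (a : Fin p → ℂ) (b : Fin q → ℂ) (z : ℂ)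
    (k : ℕ) : ℂ :=
  (∏ i, poch (a i) k) / (∏ j, poch (b j) k) * z ^ k / k !

section Convergence

variable {p q : ℕ} (a : Fin p → ℂ) (b : Fin q → ℂ) (z : ℂ)

lemma hypergeometricTerm_succ (k : ℕ) :
    hypergeometricTerm a b z (k + 1) =
      (∏ i, (a i + k)) / (∏ j, (b j + k)) / (k + 1) * z * hypergeometricTerm a b z k := by
  simp only [hypergeometricTerm, poch_succ, prod_mul_distrib, factorial_succ, pow_succ,
    cast_mul, cast_succ, div_eq_mul_inv, mul_inv]
  ring

lemma norm_hypergeometricTerm_succ (k : ℕ) :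
    ‖hypergeometricTerm a b z (k + 1)‖ =
      (∏ i, ‖a i + k‖) / (∏ j, ‖b j + k‖) / (k + 1) * ‖z‖ * ‖hypergeometricTerm a b z k‖ := by
  rw [hypergeometricTerm_succ, norm_mul, norm_mul, norm_div, norm_div, norm_prod, norm_prod,
    norm_natCast_add_one]

lemma tendsto_norm_add_natCast_div (c : ℂ) :
    Tendsto (fun k : ℕ => ‖c + k‖ / ((k : ℝ) + 1)) atTop (𝓝 1) := by
  have h : Tendsto (fun k : ℕ => 1 + (c - 1) * (1 / ((k : ℂ) + 1))) atTop (𝓝 1) := by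
    simpa using tendsto_const_nhds.add
      (tendsto_const_nhds.mul (tendsto_one_div_add_atTop_nhds_zero_nat (𝕜 := ℂ)))
  have h' := h.norm
  rw [norm_one] at h'
  refine h'.congr fun k => ?_
  rw [show 1 + (c - 1) * (1 / ((k : ℂ) + 1)) = (c + k) / (k + 1) by field_simp; ring,
    norm_div, norm_natCast_add_one]

lemma tendsto_inv_natCast_add_one_pow (m : ℕ) :
    Tendsto (fun k : ℕ => (((k : ℝ) + 1) ^ m)⁻¹) atTop (𝓝 (if m = 0 then 1 else 0)) := by
  split_ifs with hm
  · simp [hm]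
  · exact ((tendsto_pow_atTop hm).comp
      (tendsto_atTop_add_const_right _ 1 tendsto_natCast_atTop_atTop)).inv_tendsto_atTop

lemma hypergeometric_ratio_eq (hpq : p ≤ q + 1) (k : ℕ) :
    (∏ i, ‖a i + k‖) / (∏ j, ‖b j + k‖) / (k + 1) * ‖z‖ =
      (∏ i, ‖a i + k‖ / (k + 1)) / (∏ j, ‖b j + k‖ / (k + 1)) * ‖z‖ *
        (((k : ℝ) + 1) ^ (q + 1 - p))⁻¹ := by
  have hpow : ((k : ℝ) + 1) ^ q * (k + 1) = (k + 1) ^ p * (k + 1) ^ (q + 1 - p) := by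
    rw [← pow_succ, ← pow_add, Nat.add_sub_cancel' hpq]
  simp only [prod_div_distrib, prod_const, Finset.card_fin]
  rcases eq_or_ne (∏ j, ‖b j + k‖) 0 with hB | hB
  · simp [hB]
  field_simp
  linear_combination -(∏ i, ‖a i + k‖) * ‖z‖ * hpow

lemma tendsto_hypergeometric_ratio (hpq : p ≤ q + 1) :
    Tendsto (fun k : ℕ => (∏ i, ‖a i + k‖) / (∏ j, ‖b j + k‖) / (k + 1) * ‖z‖) atTop
      (𝓝 (‖z‖ * if q + 1 - p = 0 then 1 else 0)) := by
  have hprod : ∀ {r : ℕ} (c : Fin r → ℂ),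
      Tendsto (fun k : ℕ => ∏ i, ‖c i + k‖ / ((k : ℝ) + 1)) atTop (𝓝 1) := fun c => by
    simpa using tendsto_finsetProd univ fun i _ => tendsto_norm_add_natCast_div (c i)
  simp only [hypergeometric_ratio_eq a b z hpq]
  simpa using (((hprod a).div (hprod b) one_ne_zero).mul_const ‖z‖).mul
    (tendsto_inv_natCast_add_one_pow (q + 1 - p))

lemma summable_norm_hypergeometricTerm (hpq : p ≤ q + 1) (hz : p = q + 1 → ‖z‖ < 1) :
    Summable fun k => ‖hypergeometricTerm a b z k‖ := by
  set L := ‖z‖ * if q + 1 - p = 0 then 1 else 0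
  have hL : L < 1 := by
    simp only [L]
    split_ifs with h
    · simpa using hz (by omega)
    · simp
  refine summable_of_ratio_norm_eventually_le (r := (L + 1) / 2) (by linarith) ?_
  filter_upwards [(tendsto_hypergeometric_ratio a b z hpq).eventually_le_const
    (by linarith : L < (L + 1) / 2)] with k hk
  rw [norm_norm, norm_norm, norm_hypergeometricTerm_succ]
  exact mul_le_mul_of_nonneg_right hk (norm_nonneg _)

end Convergence

section GeneratingFunction

variable {p q : ℕ} (α : Fin p → ℝ) (β : Fin q → ℝ)

lemma bL_mul_pow_div_factorial (n : ℕ) (x t : ℂ) :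
    bL p q α β n x * t ^ n / n ! = ∑ k ∈ range (n + 1),
      hypergeometricTerm (fun i => (α i : ℂ)) (fun j => (β j : ℂ)) (-(x * t)) k *
        (t ^ (n - k) / (n - k)!) := by
  rw [bL, tsum_eq_sum (s := range (n + 1)), sum_mul, sum_div]
  · refine sum_congr rfl fun k hk => ?_
    have hkn : k ≤ n := mem_range_succ_iff.1 hk
    have hfac : ((n - k)! : ℂ) * n.descFactorial k = n ! := by
      exact_mod_cast factorial_mul_descFactorial hkn
    have hdesc : (n.descFactorial k : ℂ) ≠ 0 := by
      exact_mod_cast (descFactorial_pos.2 hkn).ne'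
    have ht : t ^ n = t ^ k * t ^ (n - k) := by rw [← pow_add, Nat.add_sub_cancel' hkn]
    rw [hypergeometricTerm, poch_neg_natCast, ht, ← hfac]
    field_simp
    ring
  · intro k hk
    rw [poch_neg_natCast, descFactorial_eq_zero_iff_lt.2 (by simpa using hk)]
    simp

lemma hasSum_bL_mul_pow_div_factorial (x t : ℂ)
    (h : Summable fun k =>
      ‖hypergeometricTerm (fun i => (α i : ℂ)) (fun j => (β j : ℂ)) (-(x * t)) k‖) :
    HasSum (fun n => bL p q α β n x * t ^ n / n !)
      (Complex.exp t * ∑' k, hypergeometricTerm (fun i => (α i : ℂ)) (fun j => (β j : ℂ))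
        (-(x * t)) k) := by
  have hCauchy := hasSum_sum_range_mul_of_summable_norm h
    (NormedSpace.norm_expSeries_div_summable t)
  rw [(NormedSpace.expSeries_div_hasSum_exp t).tsum_eq, ← Complex.exp_eq_exp_ℂ] at hCauchy
  rw [mul_comm (Complex.exp t)]
  simpa only [bL_mul_pow_div_factorial] using hCauchy

end GeneratingFunction

theorem stmt_2_general (p q : ℕ) (hpq : p ≤ q + 1) (α : Fin p → ℝ) (β : Fin q → ℝ) :
    (∀ t x : ℂ, ‖t‖ < 1 → ‖x‖ < 1 →
      HasSum (fun n : ℕ => bL p q α β n x * t ^ n / (Nat.factorial n))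
        (Complex.exp t *
          ∑' k : ℕ, (∏ i, poch (α i) k) / (∏ j, poch (β j) k) * (-(x*t)) ^ k /
            (Nat.factorial k)))
    ∧ (p ≤ q → ∀ t x : ℂ,
      HasSum (fun n : ℕ => bL p q α β n x * t ^ n / (Nat.factorial n))
        (Complex.exp t *
          ∑' k : ℕ, (∏ i, poch (α i) k) / (∏ j, poch (β j) k) * (-(x*t)) ^ k /
            (Nat.factorial k))) := by
  have generatingFunction (t x : ℂ) (h : p = q + 1 → ‖x * t‖ < 1) :=
    hasSum_bL_mul_pow_div_factorial α β x t
      (summable_norm_hypergeometricTerm _ _ _ hpq (by simpa using h))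
  refine ⟨fun t x ht hx => generatingFunction t x fun _ => ?_,
    fun hpq' t x => generatingFunction t x fun h => by omega⟩
  rw [norm_mul]
  nlinarith [norm_nonneg x, norm_nonneg t]

theorem stmt_2 (p q : ℕ) (hpq : p ≤ q + 1) (α : Fin p → ℝ) (β : Fin q → ℝ)
    (hα : ∀ i, 0 < α i) (hβ : ∀ j, 0 < β j) :
    (∀ t x : ℂ, ‖t‖ < 1 → ‖x‖ < 1 →
      HasSum (fun n : ℕ => bL p q α β n x * t ^ n / (Nat.factorial n))
        (Complex.exp t *
          ∑' k : ℕ, (∏ i, poch (α i) k) / (∏ j, poch (β j) k) * (-(x*t)) ^ k /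
            (Nat.factorial k)))
    ∧ (p ≤ q → ∀ t x : ℂ,
      HasSum (fun n : ℕ => bL p q α β n x * t ^ n / (Nat.factorial n))
        (Complex.exp t *
          ∑' k : ℕ, (∏ i, poch (α i) k) / (∏ j, poch (β j) k) * (-(x*t)) ^ k /
            (Nat.factorial k))) :=
  stmt_2_general p q hpq α β
end

section
/- Let ρ ∈ ℕ, δ₁, …, δ_ρ ∈ (−1, ∞), κ₁, …, κ_ρ ∈ ℤ₊, let 0 < c < 1/2, and let α, β ∈ (−1, ∞) with α + β > −1. Then for all complex t, x with |t| < c and |x| < 1/(4c) − 1/2, one has (1−t)^{−α−β−1} · ᵨ₊₂F_{ρ+1}((α+β+1)/2, (α+β+2)/2, δ₁+1, …, δ_ρ+1; α+1, κ₁+δ₁+1, …, κ_ρ+δ_ρ+1; −4xt/(1−t)²) = Σ_{n=0}^∞ ((α+β+1)_n / n!) 𝒫_n(x) tⁿ, where the series converges. -/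
/-- The polynomials
`𝒫_n(x;α,β,δ₁,…,δ_ρ,κ₁,…,κ_ρ)
 = ᵨ₊₂F_{ρ+1}(-n, n+α+β+1, δ₁+1,…,δ_ρ+1; α+1, κ₁+δ₁+1,…,κ_ρ+δ_ρ+1; x)`
(the series terminates since `(-n)_k = 0` for `k > n`). -/
noncomputable def calP (ρ : ℕ) (α β : ℝ) (δ : Fin ρ → ℝ) (κ : Fin ρ → ℕ)
    (n : ℕ) (x : ℂ) : ℂ :=
  ∑' k : ℕ, poch (-(n : ℂ)) k * poch ((n : ℂ) + α + β + 1) k *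
      (∏ i, poch ((δ i : ℂ) + 1) k) /
      (poch ((α : ℂ) + 1) k * ∏ i, poch ((κ i : ℂ) + (δ i : ℂ) + 1) k) *
      x ^ k / (Nat.factorial k)

open Polynomial Nat Finset

section ascPochhammer

lemma ascPochhammer_eval_add {S : Type*} [CommSemiring S] (c : S) (m n : ℕ) :
    (ascPochhammer S (m + n)).eval c =
      (ascPochhammer S m).eval c * (ascPochhammer S n).eval (c + m) := by
  rw [← ascPochhammer_mul, eval_mul, eval_comp, eval_add, eval_X, eval_natCast]

lemma ascPochhammer_eval_two_mul {K : Type*} [Field K] [NeZero (2 : K)] (c : K) (k : ℕ) :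
    (ascPochhammer K (2 * k)).eval c =
      4 ^ k * (ascPochhammer K k).eval (c / 2) * (ascPochhammer K k).eval ((c + 1) / 2) := by
  induction k with
  | zero => simp
  | succ k ih =>
    rw [show 2 * (k + 1) = 2 * k + 1 + 1 by ring, ascPochhammer_succ_eval, ascPochhammer_succ_eval,
      ih, ascPochhammer_succ_eval, ascPochhammer_succ_eval]
    have h2 : (2 : K) ≠ 0 := two_ne_zero
    push_cast
    field_simp
    ring

lemma ascPochhammer_eval_neg_natCast {R : Type*} [CommRing R] (n k : ℕ) :
    (ascPochhammer R k).eval (-(n : R)) = (-1) ^ k * n.descFactorial k := by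
  rw [ascPochhammer_eval_neg_eq_descPochhammer, descPochhammer_eval_eq_descFactorial]

variable {S : Type*} [CommSemiring S] [PartialOrder S] [IsOrderedRing S]

lemma ascPochhammer_eval_nonneg (n : ℕ) {s : S} (hs : 0 ≤ s) :
    0 ≤ (ascPochhammer S n).eval s := by
  induction n with
  | zero => simp
  | succ n ih => rw [ascPochhammer_succ_eval]; positivity

lemma monotoneOn_ascPochhammer_eval (n : ℕ) :
    MonotoneOn (fun s ↦ (ascPochhammer S n).eval s) (Set.Ici 0) := by
  intro s (hs : 0 ≤ s) s' _ h
  induction n with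
  | zero => simp
  | succ n ih =>
    simp only [ascPochhammer_succ_eval]
    exact mul_le_mul ih (by gcongr) (by positivity) (ascPochhammer_eval_nonneg n (hs.trans h))

end ascPochhammer

lemma norm_ascPochhammer_eval_le {𝕜 : Type*} [SeminormedRing 𝕜] [NormOneClass 𝕜] (n : ℕ)
    (z : 𝕜) : ‖(ascPochhammer 𝕜 n).eval z‖ ≤ (ascPochhammer ℝ n).eval ‖z‖ := by
  induction n with
  | zero => simp
  | succ n ih =>
    rw [ascPochhammer_succ_eval, ascPochhammer_succ_eval]
    calc ‖(ascPochhammer 𝕜 n).eval z * (z + n)‖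
        ≤ ‖(ascPochhammer 𝕜 n).eval z‖ * (‖z‖ + ‖(n : 𝕜)‖) :=
          (norm_mul_le _ _).trans (by gcongr; exact norm_add_le _ _)
      _ ≤ (ascPochhammer ℝ n).eval ‖z‖ * (‖z‖ + n) := by
          gcongr
          · exact ascPochhammer_eval_nonneg n (norm_nonneg z)
          · simpa using Nat.norm_cast_le (α := 𝕜) n

lemma Ring.choose_add_sub_one_eq_ascPochhammer_div {K : Type*} [Field K] [CharZero K] (a : K)
    (n : ℕ) : Ring.choose (a + n - 1) n = (ascPochhammer K n).eval a / n ! := by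
  rw [Ring.choose_eq_smul, descPochhammer_smeval_eq_ascPochhammer, ascPochhammer_smeval_eq_eval,
    smul_eq_mul, inv_mul_eq_div]
  ring_nf

theorem Complex.hasSum_ascPochhammer_mul_pow_div_factorial (a : ℂ) {t : ℂ} (ht : ‖t‖ < 1) :
    HasSum (fun n ↦ (ascPochhammer ℂ n).eval a * t ^ n / n !) ((1 - t) ^ (-a)) := by
  have := (Complex.one_div_one_sub_cpow_hasFPowerSeriesOnBall_zero a).hasSum
    (y := t) (by simpa [enorm_eq_nnnorm, ← NNReal.coe_lt_one] using ht)
  rw [zero_add, one_div, ← Complex.cpow_neg] at this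
  refine this.congr_fun fun n ↦ ?_
  rw [FormalMultilinearSeries.ofScalars_apply_eq, Ring.choose_add_sub_one_eq_ascPochhammer_div,
    smul_eq_mul]
  ring

theorem Real.hasSum_ascPochhammer_mul_pow_div_factorial (a : ℝ) {t : ℝ} (ht : |t| < 1) :
    HasSum (fun n ↦ (ascPochhammer ℝ n).eval a * t ^ n / n !) ((1 - t) ^ (-a)) := by
  have := (Real.one_div_one_sub_rpow_hasFPowerSeriesOnBall_zero a).hasSum
    (y := t) (by simpa [enorm_eq_nnnorm, ← NNReal.coe_lt_one] using ht)
  rw [zero_add, one_div, ← Real.rpow_neg (by linarith [(abs_lt.mp ht).2])] at this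
  refine this.congr_fun fun n ↦ ?_
  rw [FormalMultilinearSeries.ofScalars_apply_eq, Ring.choose_add_sub_one_eq_ascPochhammer_div,
    smul_eq_mul]
  ring

theorem summable_ordinaryHypergeometricCoefficient_mul_pow {a b c q : ℝ} (ha : 0 < a) (hb : 0 < b)
    (hc : 0 < c) (hq : |q| < 1) :
    Summable fun n ↦ ordinaryHypergeometricCoefficient a b c n * q ^ n := by
  have hr := ordinaryHypergeometricSeries_radius_eq_one ℝ a b c fun k ↦
    ⟨by linarith [k.cast_nonneg (α := ℝ)], by linarith [k.cast_nonneg (α := ℝ)],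
      by linarith [k.cast_nonneg (α := ℝ)]⟩
  have := (ordinaryHypergeometricSeries ℝ a b c).summable_norm_apply (x := q)
    (by simpa [hr, enorm_eq_nnnorm, ← NNReal.coe_lt_one] using hq)
  refine this.of_norm.congr fun n ↦ ?_
  rw [ordinaryHypergeometricSeries_apply_eq, smul_eq_mul]

theorem HasSum.sum_antidiagonal {A α : Type*} [AddMonoid A] [HasAntidiagonal A]
    [AddCommMonoid α] [TopologicalSpace α] [ContinuousAdd α] [RegularSpace α]
    {f : A × A → α} {s : α} (h : HasSum f s) :
    HasSum (fun n ↦ ∑ p ∈ antidiagonal n, f p) s :=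
  (HasAntidiagonal.sigmaAntidiagonalEquivProd.hasSum_iff.mpr h).sigma fun n ↦ by
    rw [← sum_coe_sort]
    exact hasSum_fintype _

lemma poch_eq_ascPochhammer_eval (c : ℂ) (k : ℕ) : poch c k = (ascPochhammer ℂ k).eval c := by
  induction k with
  | zero => simp [poch]
  | succ k ih => rw [poch, prod_range_succ, ← poch, ih, ascPochhammer_succ_eval]

lemma norm_poch_ofReal {c : ℝ} (hc : 0 ≤ c) (k : ℕ) :
    ‖poch c k‖ = (ascPochhammer ℝ k).eval c := by
  rw [poch_eq_ascPochhammer_eval, ascPochhammer_eval₂ (algebraMap ℝ ℂ), ← Complex.coe_algebraMap,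
    eval₂_at_apply, Complex.coe_algebraMap, Complex.norm_real,
    Real.norm_of_nonneg (ascPochhammer_eval_nonneg k hc)]

section DoubleSeries

variable (γ : ℂ) (a : ℕ → ℂ) (y t : ℂ)

/-- The `(k, m)` term of `∑ₖ aₖ yᵏ tᵏ (γ)₂ₖ / k! · (1 - t)^(-γ-2k)` once each binomial factor is
expanded in powers `tᵐ`. -/
noncomputable def doubleSeriesTerm (p : ℕ × ℕ) : ℂ :=
  a p.1 * y ^ p.1 / p.1 ! * (poch γ (p.2 + 2 * p.1) / p.2 !) * t ^ (p.2 + p.1)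

noncomputable def doubleSeriesMajorant (g : ℝ) (A : ℕ → ℝ) (Y r : ℝ) (p : ℕ × ℕ) : ℝ :=
  A p.1 * Y ^ p.1 / p.1 ! * ((ascPochhammer ℝ (p.2 + 2 * p.1)).eval g / p.2 !) * r ^ (p.2 + p.1)

lemma hasSum_doubleSeriesTerm_fiber (ht : ‖t‖ < 1) (k : ℕ) :
    HasSum (fun m ↦ doubleSeriesTerm γ a y t (k, m))
      ((1 - t) ^ (-γ) * (poch (γ / 2) k * poch ((γ + 1) / 2) k * a k *
        (4 * y * t / (1 - t) ^ 2) ^ k / k !)) := by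
  have h1t : 1 - t ≠ 0 := fun h ↦ by simp [show t = 1 by linear_combination -h] at ht
  have hb : HasSum (fun m ↦ a k * y ^ k / k ! * poch γ (2 * k) * t ^ k *
      ((ascPochhammer ℂ m).eval (γ + (2 * k : ℕ)) * t ^ m / m !))
      (a k * y ^ k / k ! * poch γ (2 * k) * t ^ k * (1 - t) ^ (-(γ + (2 * k : ℕ)))) :=
    (Complex.hasSum_ascPochhammer_mul_pow_div_factorial _ ht).mul_left _
  rw [neg_add, Complex.cpow_add _ _ h1t, Complex.cpow_neg _ ((2 * k : ℕ) : ℂ),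
    Complex.cpow_natCast, pow_mul] at hb
  convert hb using 1
  · ext m
    simp only [doubleSeriesTerm, poch_eq_ascPochhammer_eval]
    rw [add_comm m, ascPochhammer_eval_add, pow_add]
    ring
  · simp only [poch_eq_ascPochhammer_eval, ascPochhammer_eval_two_mul, div_pow]
    field_simp
    ring

lemma hasSum_doubleSeriesMajorant_fiber (g : ℝ) (A : ℕ → ℝ) (Y : ℝ) {r : ℝ} (hr0 : 0 ≤ r)
    (hr : r < 1) (k : ℕ) :
    HasSum (fun m ↦ doubleSeriesMajorant g A Y r (k, m))
      ((1 - r) ^ (-g) * ((ascPochhammer ℝ k).eval (g / 2) *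
        (ascPochhammer ℝ k).eval ((g + 1) / 2) * A k * (4 * Y * r / (1 - r) ^ 2) ^ k / k !)) := by
  have h1r : 0 < 1 - r := by linarith
  have hb : HasSum (fun m ↦ A k * Y ^ k / k ! * (ascPochhammer ℝ (2 * k)).eval g * r ^ k *
      ((ascPochhammer ℝ m).eval (g + (2 * k : ℕ)) * r ^ m / m !))
      (A k * Y ^ k / k ! * (ascPochhammer ℝ (2 * k)).eval g * r ^ k *
        (1 - r) ^ (-(g + (2 * k : ℕ)))) :=
    (Real.hasSum_ascPochhammer_mul_pow_div_factorial _ (abs_lt.mpr ⟨by linarith, hr⟩)).mul_left _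
  rw [neg_add, Real.rpow_add h1r, Real.rpow_neg h1r.le ((2 * k : ℕ) : ℝ), Real.rpow_natCast,
    pow_mul] at hb
  convert hb using 1
  · ext m
    rw [doubleSeriesMajorant, add_comm m, ascPochhammer_eval_add, pow_add]
    ring
  · rw [ascPochhammer_eval_two_mul, div_pow]
    field_simp
    ring

lemma norm_doubleSeriesTerm_le (p : ℕ × ℕ) :
    ‖doubleSeriesTerm γ a y t p‖ ≤ doubleSeriesMajorant ‖γ‖ (‖a ·‖) ‖y‖ ‖t‖ p := by
  simp only [doubleSeriesTerm, doubleSeriesMajorant, norm_mul, norm_div, norm_pow,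
    Complex.norm_natCast]
  gcongr
  rw [poch_eq_ascPochhammer_eval]
  exact norm_ascPochhammer_eval_le _ γ

lemma summable_doubleSeriesMajorant {g : ℝ} (hg : 0 ≤ g) {A : ℕ → ℝ} (hA : ∀ k, 0 ≤ A k)
    {Y r : ℝ} (hY : 0 ≤ Y) (hr0 : 0 ≤ r) (hr : r < 1)
    (hsum : Summable fun k ↦ (ascPochhammer ℝ k).eval (g / 2) *
      (ascPochhammer ℝ k).eval ((g + 1) / 2) * A k * (4 * Y * r / (1 - r) ^ 2) ^ k / k !) :
    Summable (doubleSeriesMajorant g A Y r) := by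
  have hfib := hasSum_doubleSeriesMajorant_fiber g A Y hr0 hr
  refine (summable_prod_of_nonneg fun p ↦ ?_).mpr
    ⟨fun k ↦ (hfib k).summable, (hsum.mul_left _).congr fun k ↦ (hfib k).tsum_eq.symm⟩
  have := ascPochhammer_eval_nonneg (p.2 + 2 * p.1) hg
  have := hA p.1
  unfold doubleSeriesMajorant
  positivity

lemma sum_antidiagonal_doubleSeriesTerm (x : ℂ) (n : ℕ) :
    ∑ p ∈ antidiagonal n, doubleSeriesTerm γ a (-x) t p =
      poch γ n / n ! * (∑ k ∈ range (n + 1),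
        poch (-n) k * poch (n + γ) k * a k * x ^ k / k !) * t ^ n := by
  rw [Nat.sum_antidiagonal_eq_sum_range_succ_mk, mul_sum, sum_mul]
  refine sum_congr rfl fun k hk ↦ ?_
  have hkn : k ≤ n := Nat.lt_succ_iff.mp (mem_range.mp hk)
  have hfac : ((n - k) ! * n.descFactorial k : ℂ) = n ! := by
    exact_mod_cast Nat.factorial_mul_descFactorial hkn
  have hdesc : (n.descFactorial k : ℂ) ≠ 0 := by
    exact_mod_cast (Nat.descFactorial_pos.mpr hkn).ne'
  simp only [doubleSeriesTerm, poch_eq_ascPochhammer_eval]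
  rw [Nat.sub_add_cancel hkn, show n - k + 2 * k = n + k by omega, ascPochhammer_eval_add,
    ascPochhammer_eval_neg_natCast, add_comm γ, neg_pow, ← hfac]
  field_simp

end DoubleSeries

theorem hasSum_poch_mul_sum_mul_pow {γ : ℂ} {a : ℕ → ℂ} {x t : ℂ} (ht : ‖t‖ < 1)
    (hsum : Summable fun k ↦ (ascPochhammer ℝ k).eval (‖γ‖ / 2) *
      (ascPochhammer ℝ k).eval ((‖γ‖ + 1) / 2) * ‖a k‖ *
        (4 * ‖x‖ * ‖t‖ / (1 - ‖t‖) ^ 2) ^ k / k !) :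
    HasSum (fun n ↦ poch γ n / n ! *
        (∑ k ∈ range (n + 1), poch (-n) k * poch (n + γ) k * a k * x ^ k / k !) * t ^ n)
      ((1 - t) ^ (-γ) * ∑' k, poch (γ / 2) k * poch ((γ + 1) / 2) k * a k *
        (-(4 * x * t / (1 - t) ^ 2)) ^ k / k !) := by
  have hS : Summable (doubleSeriesTerm γ a (-x) t) := by
    refine .of_norm_bounded (summable_doubleSeriesMajorant (norm_nonneg γ)
      (fun _ ↦ norm_nonneg _) (norm_nonneg _) (norm_nonneg t) ht ?_)
      (norm_doubleSeriesTerm_le γ a (-x) t)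
    simpa only [norm_neg] using hsum
  have hfib := hS.hasSum.prod_fiberwise (hasSum_doubleSeriesTerm_fiber γ a (-x) t ht)
  have hdiag := hS.hasSum.sum_antidiagonal
  rw [hfib.tsum_eq.symm.trans tsum_mul_left] at hdiag
  simpa only [sum_antidiagonal_doubleSeriesTerm, mul_neg, neg_mul, neg_div] using hdiag

noncomputable def hypergeomWeight {ρ : ℕ} (α : ℝ) (δ : Fin ρ → ℝ) (κ : Fin ρ → ℕ) (k : ℕ) : ℂ :=
  (∏ i, poch ((δ i : ℂ) + 1) k) /
    (poch ((α : ℂ) + 1) k * ∏ i, poch ((κ i : ℂ) + (δ i : ℂ) + 1) k)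

lemma norm_hypergeomWeight_le {ρ : ℕ} {α : ℝ} {δ : Fin ρ → ℝ} (κ : Fin ρ → ℕ) (hα : -1 < α)
    (hδ : ∀ i, -1 < δ i) (k : ℕ) :
    ‖hypergeomWeight α δ κ k‖ ≤ ((ascPochhammer ℝ k).eval (α + 1))⁻¹ := by
  have hnum (i : Fin ρ) : 0 ≤ δ i + 1 := by linarith [hδ i]
  have hden (i : Fin ρ) : δ i + 1 ≤ κ i + δ i + 1 := by linarith [(κ i).cast_nonneg (α := ℝ)]
  have hαk : 0 < (ascPochhammer ℝ k).eval (α + 1) := ascPochhammer_pos k _ (by linarith)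
  have hδk (i : Fin ρ) : ‖poch ((δ i : ℂ) + 1) k‖ = (ascPochhammer ℝ k).eval (δ i + 1) := by
    exact_mod_cast norm_poch_ofReal (hnum i) k
  have hκδk (i : Fin ρ) :
      ‖poch ((κ i : ℂ) + (δ i : ℂ) + 1) k‖ = (ascPochhammer ℝ k).eval (κ i + δ i + 1) := by
    exact_mod_cast norm_poch_ofReal ((hnum i).trans (hden i)) k
  have hαk' : ‖poch ((α : ℂ) + 1) k‖ = (ascPochhammer ℝ k).eval (α + 1) := by
    exact_mod_cast norm_poch_ofReal (by linarith : 0 ≤ α + 1) k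
  have hprod : 0 < ∏ i, (ascPochhammer ℝ k).eval (κ i + δ i + 1 : ℝ) :=
    prod_pos fun i _ ↦ ascPochhammer_pos k _ (by linarith [hδ i, hden i])
  rw [hypergeomWeight, norm_div, norm_mul, norm_prod, norm_prod]
  simp only [hδk, hκδk, hαk']
  rw [div_le_iff₀ (mul_pos hαk hprod), inv_mul_cancel_left₀ hαk.ne']
  exact prod_le_prod (fun i _ ↦ ascPochhammer_eval_nonneg k (hnum i))
    fun i _ ↦ monotoneOn_ascPochhammer_eval k (hnum i) ((hnum i).trans (hden i)) (hden i)

lemma summable_hypergeomWeight_mul_pow {ρ : ℕ} {α : ℝ} {δ : Fin ρ → ℝ} (κ : Fin ρ → ℕ)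
    (hα : -1 < α) (hδ : ∀ i, -1 < δ i) {g q : ℝ} (hg : 0 ≤ g) (hq0 : 0 ≤ q) (hq : q < 1) :
    Summable fun k ↦ (ascPochhammer ℝ k).eval (g / 2) * (ascPochhammer ℝ k).eval ((g + 1) / 2) *
      ‖hypergeomWeight α δ κ k‖ * q ^ k / k ! := by
  have hg2 : 0 ≤ g / 2 := by positivity
  have hg2' : 0 ≤ (g + 1) / 2 := by positivity
  refine .of_nonneg_of_le (fun k ↦ ?_) (fun k ↦ ?_)
    (summable_ordinaryHypergeometricCoefficient_mul_pow (a := (g + 1) / 2) (b := (g + 1) / 2)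
      (c := α + 1) (by positivity) (by positivity) (by linarith) (abs_lt.mpr ⟨by linarith, hq⟩))
  · have := ascPochhammer_eval_nonneg k hg2
    have := ascPochhammer_eval_nonneg k hg2'
    positivity
  · have h1 := monotoneOn_ascPochhammer_eval k hg2 hg2' (by linarith : g / 2 ≤ (g + 1) / 2)
    have h2 := norm_hypergeomWeight_le κ hα hδ k
    have := ascPochhammer_eval_nonneg k hg2
    have := ascPochhammer_eval_nonneg k hg2'
    rw [ordinaryHypergeometricCoefficient, div_eq_mul_inv]
    calc _ ≤ (ascPochhammer ℝ k).eval ((g + 1) / 2) * (ascPochhammer ℝ k).eval ((g + 1) / 2) *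
          ((ascPochhammer ℝ k).eval (α + 1))⁻¹ * q ^ k * (k ! : ℝ)⁻¹ := by gcongr
      _ = _ := by ring

lemma four_mul_mul_div_one_sub_sq_lt_one {c X r : ℝ} (hc : 0 < c) (hc2 : c < 1 / 2) (hX0 : 0 ≤ X)
    (hX : X < 1 / (4 * c) - 1 / 2) (hr0 : 0 ≤ r) (hr : r < c) :
    4 * X * r / (1 - r) ^ 2 < 1 := by
  have h4cX : 4 * c * X < 1 - 2 * c := by
    have := mul_lt_mul_of_pos_left hX (by positivity : 0 < 4 * c)
    rw [mul_sub, mul_one_div_cancel (by positivity)] at this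
    linarith
  rw [div_lt_one (by nlinarith)]
  nlinarith [mul_le_mul_of_nonneg_left hr.le (by positivity : 0 ≤ 4 * X)]

lemma calP_eq_sum {ρ : ℕ} (α β : ℝ) (δ : Fin ρ → ℝ) (κ : Fin ρ → ℕ) (n : ℕ) (x : ℂ) :
    calP ρ α β δ κ n x = ∑ k ∈ range (n + 1),
      poch (-n) k * poch (n + (α + β + 1)) k * hypergeomWeight α δ κ k * x ^ k / k ! := by
  rw [calP, tsum_eq_sum fun k hk ↦ ?_]
  · refine sum_congr rfl fun k _ ↦ ?_
    rw [hypergeomWeight, ← add_assoc, ← add_assoc]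
    ring
  · rw [poch_eq_ascPochhammer_eval, ascPochhammer_eval_neg_natCast,
      Nat.descFactorial_eq_zero_iff_lt.mpr (by simpa using hk)]
    simp

theorem stmt_3_general (ρ : ℕ) (δ : Fin ρ → ℝ) (hδ : ∀ i, -1 < δ i)
    (κ : Fin ρ → ℕ) (c : ℝ) (hc1 : 0 < c) (hc2 : c < 1/2)
    (α β : ℝ) (hα : -1 < α)
    (t x : ℂ) (ht : ‖t‖ < c) (hx : ‖x‖ < 1/(4*c) - 1/2) :
    HasSum
      (fun n : ℕ => poch ((α : ℂ) + β + 1) n / (Nat.factorial n) *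
        calP ρ α β δ κ n x * t ^ n)
      ((1 - t) ^ (-(α : ℂ) - β - 1) *
        ∑' k : ℕ, poch (((α : ℂ) + β + 1)/2) k * poch (((α : ℂ) + β + 2)/2) k *
          (∏ i, poch ((δ i : ℂ) + 1) k) /
          (poch ((α : ℂ) + 1) k * ∏ i, poch ((κ i : ℂ) + (δ i : ℂ) + 1) k) *
          (-(4*x*t/(1-t)^2)) ^ k / (Nat.factorial k)) := by
  have hq := four_mul_mul_div_one_sub_sq_lt_one hc1 hc2 (norm_nonneg x) hx (norm_nonneg t) ht
  have key := hasSum_poch_mul_sum_mul_pow (γ := α + β + 1) (a := hypergeomWeight α δ κ) (x := x)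
    (by linarith) (summable_hypergeomWeight_mul_pow κ hα hδ (norm_nonneg _) (by positivity) hq)
  simp only [← calP_eq_sum] at key
  convert key using 3
  · ring
  · ext k
    rw [hypergeomWeight, show ((α : ℂ) + β + 1 + 1) / 2 = (α + β + 2) / 2 by ring]
    ring

theorem stmt_3 (ρ : ℕ) (hρ : 0 < ρ) (δ : Fin ρ → ℝ) (hδ : ∀ i, -1 < δ i)
    (κ : Fin ρ → ℕ) (c : ℝ) (hc1 : 0 < c) (hc2 : c < 1/2)
    (α β : ℝ) (hα : -1 < α) (hβ : -1 < β) (hαβ : -1 < α + β)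
    (t x : ℂ) (ht : ‖t‖ < c) (hx : ‖x‖ < 1/(4*c) - 1/2) :
    HasSum
      (fun n : ℕ => poch ((α : ℂ) + β + 1) n / (Nat.factorial n) *
        calP ρ α β δ κ n x * t ^ n)
      ((1 - t) ^ (-(α : ℂ) - β - 1) *
        ∑' k : ℕ, poch (((α : ℂ) + β + 1)/2) k * poch (((α : ℂ) + β + 2)/2) k *
          (∏ i, poch ((δ i : ℂ) + 1) k) /
          (poch ((α : ℂ) + 1) k * ∏ i, poch ((κ i : ℂ) + (δ i : ℂ) + 1) k) *
          (-(4*x*t/(1-t)^2)) ^ k / (Nat.factorial k)) :=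
  stmt_3_general ρ δ hδ κ c hc1 hc2 α β hα t x ht hx
end

section
/- Let ρ ∈ ℕ, δ₁, …, δ_ρ ∈ (−1, ∞), κ₁, …, κ_ρ ∈ ℤ₊, and α > −1. Then for every x ∈ ℂ and n ∈ ℤ₊, ℒ_n(x) = (n!/(2πi)) ∮_{|ζ|=1} ζ^{−n−1} e^ζ · ᵨF_{ρ+1}(δ₁+1, …, δ_ρ+1; α+1, κ₁+δ₁+1, …, κ_ρ+δ_ρ+1; −xζ) dζ, where the integral is taken over the positively oriented unit circle. -/
/-- The polynomials `ℒ_n(x;α,δ₁,…,δ_ρ,κ₁,…,κ_ρ)`. -/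
noncomputable def calL (ρ : ℕ) (α : ℝ) (δ : Fin ρ → ℝ) (κ : Fin ρ → ℕ)
    (n : ℕ) (x : ℂ) : ℂ :=
  ∑' k : ℕ, poch (-(n : ℂ)) k * (∏ i, poch ((δ i : ℂ) + 1) k) /
      (poch ((α : ℂ) + 1) k * ∏ i, poch ((κ i : ℂ) + (δ i : ℂ) + 1) k) *
      x ^ k / (Nat.factorial k)

open MeasureTheory Metric Real Complex Finset Nat

namespace circleIntegral

theorem hasSum_integral_of_norm_le {E ι : Type*} [NormedAddCommGroup E] [NormedSpace ℂ E]
    [Countable ι] {F : ι → ℂ → E} {f : ℂ → E} {c : ℂ} {R : ℝ} {M : ι → ℝ}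
    (hR : 0 ≤ R) (hF : ∀ k, CircleIntegrable (F k) c R)
    (hM : ∀ k, ∀ z ∈ sphere c R, ‖F k z‖ ≤ M k) (hMs : Summable M)
    (hf : ∀ z ∈ sphere c R, HasSum (fun k => F k z) (f z)) :
    HasSum (fun k => ∮ z in C(c, R), F k z) (∮ z in C(c, R), f z) := by
  refine intervalIntegral.hasSum_integral_of_dominated_convergence (fun k _ => R * M k)
    (fun k => (hF k).out.def'.aestronglyMeasurable) (fun k => ?_)
    (ae_of_all _ fun _ _ => hMs.mul_left R) intervalIntegrable_const
    (ae_of_all _ fun θ _ => (hf _ (circleMap_mem_sphere c hR θ)).const_smul _)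
  refine ae_of_all _ fun θ _ => ?_
  rw [norm_smul, deriv_circleMap, norm_mul, norm_I, mul_one, norm_circleMap_zero, abs_of_nonneg hR]
  exact mul_le_mul_of_nonneg_left (hM k _ (circleMap_mem_sphere c hR θ)) hR

theorem integral_sub_zpow (c : ℂ) {R : ℝ} (hR : 0 < R) (m : ℤ) :
    ∮ z in C(c, R), (z - c) ^ m = if m = -1 then 2 * π * I else 0 := by
  split_ifs with hm
  · simpa [hm] using integral_sub_inv_of_mem_ball (mem_ball_self hR)
  · exact integral_sub_zpow_of_ne hm c c R

theorem integral_sub_zpow_mul_tsum {c : ℂ} {R : ℝ} (hR : 0 < R) {b : ℕ → ℂ}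
    (hb : Summable fun j => ‖b j‖ * R ^ j) (n : ℕ) :
    ∮ z in C(c, R), (z - c) ^ (-(n : ℤ) - 1) * ∑' j, b j * (z - c) ^ j = 2 * π * I * b n := by
  have hne : ∀ z ∈ sphere c R, z - c ≠ 0 := fun z hz =>
    sub_ne_zero.2 (ne_of_mem_sphere hz hR.ne')
  have hnorm : ∀ z ∈ sphere c R, ‖z - c‖ = R := fun z hz => by rwa [← dist_eq_norm, ← mem_sphere]
  have hterm : ∀ j, ∮ z in C(c, R), (z - c) ^ (-(n : ℤ) - 1) * (b j * (z - c) ^ j) =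
      if j = n then 2 * π * I * b n else 0 := by
    intro j
    have hexp : (-(n : ℤ) - 1 + j = -1) ↔ j = n := by omega
    rw [integral_congr hR.le (g := fun z => b j * (z - c) ^ (-(n : ℤ) - 1 + j)),
      integral_const_mul, integral_sub_zpow c hR]
    · split_ifs <;> simp_all [mul_comm]
    · intro z hz
      simp only [zpow_add₀ (hne z hz), zpow_natCast]
      ring
  have hsum : HasSum (fun j => ∮ z in C(c, R), (z - c) ^ (-(n : ℤ) - 1) * (b j * (z - c) ^ j))
      (∮ z in C(c, R), (z - c) ^ (-(n : ℤ) - 1) * ∑' j, b j * (z - c) ^ j) := by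
    refine hasSum_integral_of_norm_le hR.le
      (M := fun j => R ^ (-(n : ℤ) - 1) * (‖b j‖ * R ^ j)) (fun j => ?_) (fun j z hz => ?_)
      (hb.mul_left _) (fun z hz => ?_)
    · exact ((continuousOn_id.sub continuousOn_const).zpow₀ _ fun z hz => Or.inl (hne z hz)).mul
        (continuousOn_const.mul ((continuousOn_id.sub continuousOn_const).pow j))
        |>.circleIntegrable hR.le
    · simp [norm_zpow, hnorm z hz]
    · refine (Summable.hasSum ?_).mul_left _
      exact .of_norm (by simpa [hnorm z hz] using hb)
  rw [funext hterm] at hsum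
  exact hsum.unique (hasSum_ite_eq n _)

theorem integral_zpow_mul_exp_mul_tsum {R : ℝ} (hR : 0 < R) {a : ℕ → ℂ}
    (ha : Summable fun k => ‖a k‖ * R ^ k) (n : ℕ) :
    ∮ z in C(0, R), z ^ (-(n : ℤ) - 1) * exp z * ∑' k, a k * z ^ k =
      2 * π * I * ∑ k ∈ range (n + 1), a k / (n - k)! := by
  set b : ℕ → ℂ := fun j => ∑ p ∈ antidiagonal j, a p.1 / p.2!
  have hcoeff : ∀ z j, ∑ p ∈ antidiagonal j, a p.1 * z ^ p.1 * (z ^ p.2 / p.2!) = b j * z ^ j := by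
    intro z j
    rw [Finset.sum_mul]
    refine Finset.sum_congr rfl fun p hp => ?_
    rw [← mem_antidiagonal.1 hp, pow_add]
    ring
  have hexp : ∀ z : ℂ, Summable fun i => ‖z ^ i / (i ! : ℂ)‖ := fun z => by
    simpa [norm_pow] using Real.summable_pow_div_factorial ‖z‖
  have hb : Summable fun j => ‖b j‖ * R ^ j := by
    refine (summable_norm_sum_mul_antidiagonal_of_summable_norm
      (f := fun k => a k * (R : ℂ) ^ k) (by simpa [abs_of_pos hR] using ha) (hexp R)).congr
      fun j => ?_
    rw [hcoeff, norm_mul, norm_pow, norm_real, Real.norm_of_nonneg hR.le]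
  have hseries : ∀ z ∈ sphere (0 : ℂ) R, exp z * ∑' k, a k * z ^ k = ∑' j, b j * z ^ j := by
    intro z hz
    have hz : ‖z‖ = R := by simpa using hz
    rw [mul_comm, exp_eq_exp_ℂ, NormedSpace.exp_eq_tsum_div,
      tsum_mul_tsum_eq_tsum_sum_antidiagonal_of_summable_norm (by simpa [hz] using ha) (hexp z)]
    exact tsum_congr (hcoeff z)
  calc ∮ z in C(0, R), z ^ (-(n : ℤ) - 1) * exp z * ∑' k, a k * z ^ k
      = ∮ z in C(0, R), (z - 0) ^ (-(n : ℤ) - 1) * ∑' j, b j * (z - 0) ^ j :=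
        integral_congr hR.le fun z hz => by simp [mul_assoc, hseries z hz]
    _ = 2 * π * I * ∑ k ∈ range (n + 1), a k / (n - k)! := by
        rw [integral_sub_zpow_mul_tsum hR hb]
        exact congrArg _ (Nat.sum_antidiagonal_eq_sum_range_succ_mk _ n)

end circleIntegral

theorem poch_neg_natCast_of_le {n k : ℕ} (h : k ≤ n) :
    poch (-(n : ℂ)) k = (-1) ^ k * (n.descFactorial k : ℂ) := by
  rw [poch, descFactorial_eq_prod_range, cast_prod,
    show (-1 : ℂ) ^ k = ∏ _j ∈ range k, (-1 : ℂ) by simp, ← prod_mul_distrib]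
  refine prod_congr rfl fun j hj => ?_
  rw [cast_sub ((mem_range.1 hj).le.trans h)]
  ring

theorem poch_neg_natCast_of_lt {n k : ℕ} (h : n < k) : poch (-(n : ℂ)) k = 0 :=
  prod_eq_zero (mem_range.2 h) (by simp)

theorem norm_poch_ofReal_s5 {r : ℝ} (hr : 0 ≤ r) (k : ℕ) :
    ‖poch (r : ℂ) k‖ = ∏ j ∈ range k, (r + j) := by
  rw [poch, norm_prod]
  refine prod_congr rfl fun j _ => ?_
  rw [← ofReal_natCast, ← ofReal_add, norm_real, Real.norm_of_nonneg (by positivity)]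

theorem norm_poch_ofReal_le {r s : ℝ} (hr : 0 ≤ r) (hrs : r ≤ s) (k : ℕ) :
    ‖poch (r : ℂ) k‖ ≤ ‖poch (s : ℂ) k‖ := by
  rw [norm_poch_ofReal_s5 hr, norm_poch_ofReal_s5 (hr.trans hrs)]
  exact prod_le_prod (fun j _ => by positivity) fun j _ => by linarith

theorem min_one_le_norm_poch_ofReal {r : ℝ} (hr : 0 < r) (k : ℕ) :
    min 1 r ≤ ‖poch (r : ℂ) k‖ := by
  rw [norm_poch_ofReal_s5 hr.le]
  induction k with
  | zero => simp
  | succ k ih =>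
    rw [prod_range_succ]
    rcases k.eq_zero_or_pos with rfl | hk
    · simp
    · calc min 1 r ≤ (∏ j ∈ range k, (r + j)) * 1 := by rwa [mul_one]
        _ ≤ (∏ j ∈ range k, (r + j)) * (r + k) := by
          gcongr
          have : (1 : ℝ) ≤ k := by exact_mod_cast hk
          linarith

/-- `hypergeomCoeff ρ α δ κ k * z ^ k / k !` is the `k`-th term of
`ρF_{ρ+1}(δ₁+1, …, δ_ρ+1; α+1, κ₁+δ₁+1, …, κ_ρ+δ_ρ+1; z)`. -/
noncomputable def hypergeomCoeff (ρ : ℕ) (α : ℝ) (δ : Fin ρ → ℝ) (κ : Fin ρ → ℕ) (k : ℕ) : ℂ :=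
  (∏ i, poch ((δ i : ℂ) + 1) k) /
    (poch ((α : ℂ) + 1) k * ∏ i, poch ((κ i : ℂ) + (δ i : ℂ) + 1) k)

theorem norm_hypergeomCoeff_le {ρ : ℕ} {α : ℝ} {δ : Fin ρ → ℝ} (hδ : ∀ i, -1 < δ i)
    (hα : -1 < α) (κ : Fin ρ → ℕ) (k : ℕ) :
    ‖hypergeomCoeff ρ α δ κ k‖ ≤ (min 1 (α + 1))⁻¹ := by
  have hcast : ∀ r : ℝ, (r : ℂ) + 1 = ((r + 1 : ℝ) : ℂ) := fun r => by push_cast; rfl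
  have hcast' : ∀ i, (κ i : ℂ) + (δ i : ℂ) + 1 = ((κ i + (δ i + 1) : ℝ) : ℂ) := fun i => by
    push_cast; ring
  have hα' : 0 < α + 1 := by linarith
  have hmin : 0 < min 1 (α + 1) := lt_min one_pos hα'
  have hnum : ∀ i, ‖poch ((δ i : ℂ) + 1) k‖ ≤ ‖poch ((κ i : ℂ) + (δ i : ℂ) + 1) k‖ := fun i => by
    rw [hcast, hcast']
    exact norm_poch_ofReal_le (by linarith [hδ i]) (by linarith [(κ i).cast_nonneg (α := ℝ)]) k
  have hden : ∀ i, 0 < ‖poch ((κ i : ℂ) + (δ i : ℂ) + 1) k‖ := fun i => by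
    rw [hcast']
    exact (lt_min one_pos (by linarith [hδ i, (κ i).cast_nonneg (α := ℝ)])).trans_le
      (min_one_le_norm_poch_ofReal (by linarith [hδ i, (κ i).cast_nonneg (α := ℝ)]) k)
  have hA : min 1 (α + 1) ≤ ‖poch ((α : ℂ) + 1) k‖ := by
    rw [hcast]
    exact min_one_le_norm_poch_ofReal hα' k
  have hP : ∏ i, ‖poch ((δ i : ℂ) + 1) k‖ ≤ ∏ i, ‖poch ((κ i : ℂ) + (δ i : ℂ) + 1) k‖ :=
    prod_le_prod (fun _ _ => norm_nonneg _) fun i _ => hnum i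
  have hQ : 0 < ∏ i, ‖poch ((κ i : ℂ) + (δ i : ℂ) + 1) k‖ := prod_pos fun i _ => hden i
  rw [hypergeomCoeff, norm_div, norm_mul, norm_prod, norm_prod, div_mul_eq_div_div_swap]
  calc (∏ i, ‖poch ((δ i : ℂ) + 1) k‖) / (∏ i, ‖poch ((κ i : ℂ) + (δ i : ℂ) + 1) k‖) /
        ‖poch ((α : ℂ) + 1) k‖
      ≤ 1 / ‖poch ((α : ℂ) + 1) k‖ := by gcongr; exact (div_le_one hQ).2 hP
    _ ≤ (min 1 (α + 1))⁻¹ := by rw [one_div]; exact inv_anti₀ hmin hA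

theorem calL_eq_sum (ρ : ℕ) (α : ℝ) (δ : Fin ρ → ℝ) (κ : Fin ρ → ℕ) (n : ℕ) (x : ℂ) :
    calL ρ α δ κ n x =
      ∑ k ∈ range (n + 1),
        (n.descFactorial k : ℂ) * (hypergeomCoeff ρ α δ κ k * (-x) ^ k / k !) := by
  rw [calL, tsum_eq_sum (s := range (n + 1)) fun k hk => ?_]
  · refine sum_congr rfl fun k hk => ?_
    rw [poch_neg_natCast_of_le (mem_range_succ_iff.1 hk), hypergeomCoeff, neg_pow]
    ring
  · rw [poch_neg_natCast_of_lt (by simpa using hk)]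
    simp

theorem stmt_5_general (ρ : ℕ) (δ : Fin ρ → ℝ) (hδ : ∀ i, -1 < δ i)
    (κ : Fin ρ → ℕ) (α : ℝ) (hα : -1 < α) (x : ℂ) (n : ℕ) :
    calL ρ α δ κ n x =
      (Nat.factorial n : ℂ) / (2 * Real.pi * Complex.I) *
        ∮ ζ in C(0, 1), ζ ^ (-(n : ℤ) - 1) * Complex.exp ζ *
          ∑' k : ℕ, (∏ i, poch ((δ i : ℂ) + 1) k) /
            (poch ((α : ℂ) + 1) k * ∏ i, poch ((κ i : ℂ) + (δ i : ℂ) + 1) k) *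
            (-(x * ζ)) ^ k / (Nat.factorial k) := by
  set a : ℕ → ℂ := fun k => hypergeomCoeff ρ α δ κ k * (-x) ^ k / (k ! : ℂ)
  have ha : Summable fun k => ‖a k‖ * 1 ^ k := by
    refine .of_nonneg_of_le (fun k => by positivity) (fun k => ?_)
      ((Real.summable_pow_div_factorial ‖x‖).mul_left (min 1 (α + 1))⁻¹)
    rw [one_pow, mul_one, norm_div, norm_mul, norm_pow, norm_neg, Complex.norm_natCast,
      mul_div_assoc]
    exact mul_le_mul_of_nonneg_right (norm_hypergeomCoeff_le hδ hα κ k) (by positivity)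
  rw [calL_eq_sum, circleIntegral.integral_congr zero_le_one
      (g := fun ζ => ζ ^ (-(n : ℤ) - 1) * exp ζ * ∑' k, a k * ζ ^ k) ?_,
    circleIntegral.integral_zpow_mul_exp_mul_tsum one_pos ha, ← mul_assoc, mul_sum]
  · refine sum_congr rfl fun k hk => ?_
    rw [← factorial_mul_descFactorial (mem_range_succ_iff.1 hk)]
    have : ((n - k)! : ℂ) ≠ 0 := cast_ne_zero.2 (factorial_ne_zero _)
    push_cast
    simp only [a]
    field_simp
  · intro ζ _
    simp only [a, hypergeomCoeff]
    exact congrArg _ (tsum_congr fun k => by rw [← neg_mul, mul_pow]; ring)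

theorem stmt_5 (ρ : ℕ) (hρ : 0 < ρ) (δ : Fin ρ → ℝ) (hδ : ∀ i, -1 < δ i)
    (κ : Fin ρ → ℕ) (α : ℝ) (hα : -1 < α) (x : ℂ) (n : ℕ) :
    calL ρ α δ κ n x =
      (Nat.factorial n : ℂ) / (2 * Real.pi * Complex.I) *
        ∮ ζ in C(0, 1), ζ ^ (-(n : ℤ) - 1) * Complex.exp ζ *
          ∑' k : ℕ, (∏ i, poch ((δ i : ℂ) + 1) k) /
            (poch ((α : ℂ) + 1) k * ∏ i, poch ((κ i : ℂ) + (δ i : ℂ) + 1) k) *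
            (-(x * ζ)) ^ k / (Nat.factorial k) :=
  stmt_5_general ρ δ hδ κ α hα x n
end
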